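/- arXiv:2202.02063 — 4 statements merged into one kernel-verified Lean document; each statement's English description precedes it below -/
import Mathlib

section
/- For quaternion matrices A, B ∈ ℚ^{M×N}, the inner product satisfies |⟨A,B⟩| ≤ ||A||_op · ||B||_*, where ⟨A,B⟩ = Tr(A*B), ||A||_op is the operator norm, and ||B||_* is the nuclear norm. -/
/-!
Write `B = U S Vᴴ` and let `u_k`, `v_l` be the (unit) columns of `U` and `V`. Expanding the
trace, `Tr(Aᴴ B) = ∑_{k,l} ∑_j (Aᴴ u_k)_j S_{kl} conj((v_l)_j)`; since `ℍ` is not commutative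
the entry `S_{kl}` stays in the middle of each product, but Cauchy–Schwarz still bounds the
inner sum by `‖Aᴴ u_k‖ |S_{kl}| ‖v_l‖ ≤ ‖A‖_op |S_{kl}|`. The adjoint bound
`‖Aᴴ x‖ ≤ ‖A‖_op ‖x‖` comes from `‖Aᴴ x‖² = ⟨x, A Aᴴ x⟩ ≤ ‖x‖ ‖A‖_op ‖Aᴴ x‖`. Summing over the
diagonal matrix `S` gives `‖A‖_op ∑ σ_i`.
-/

open Quaternion Matrix Finset

noncomputable def qVecNorm {n : ℕ} (x : Fin n → ℍ[ℝ]) : ℝ :=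
  Real.sqrt (∑ i, ‖x i‖ ^ 2)

/-- The operator norm `‖A‖_op = sup_{x ≠ 0} ‖Ax‖₂/‖x‖₂` of a quaternion matrix. -/
noncomputable def qOpNorm {m n : ℕ} (A : Matrix (Fin m) (Fin n) ℍ[ℝ]) : ℝ :=
  sSup {c : ℝ | ∃ x : Fin n → ℍ[ℝ], x ≠ 0 ∧ c = qVecNorm (A.mulVec x) / qVecNorm x}

section VecNorm

variable {n : ℕ}

lemma qVecNorm_eq_norm_toLp (x : Fin n → ℍ[ℝ]) : qVecNorm x = ‖WithLp.toLp 2 x‖ := by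
  rw [qVecNorm, PiLp.norm_eq_of_L2]

lemma qVecNorm_nonneg (x : Fin n → ℍ[ℝ]) : 0 ≤ qVecNorm x := Real.sqrt_nonneg _

lemma qVecNorm_pos {x : Fin n → ℍ[ℝ]} (hx : x ≠ 0) : 0 < qVecNorm x := by
  rw [qVecNorm_eq_norm_toLp, norm_pos_iff]
  simpa using hx

lemma qVecNorm_star (x : Fin n → ℍ[ℝ]) : qVecNorm (star x) = qVecNorm x := by
  simp [qVecNorm]

lemma star_dotProduct_self (x : Fin n → ℍ[ℝ]) :
    star x ⬝ᵥ x = ((qVecNorm x ^ 2 : ℝ) : ℍ[ℝ]) := by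
  rw [qVecNorm, Real.sq_sqrt (by positivity)]
  simp only [dotProduct, Pi.star_apply, Quaternion.star_mul_self,
    Quaternion.normSq_eq_norm_mul_self, sq, ← Quaternion.algebraMap_def, map_sum]

lemma sum_norm_mul_norm_le (p q : Fin n → ℍ[ℝ]) :
    ∑ i, ‖p i‖ * ‖q i‖ ≤ qVecNorm p * qVecNorm q :=
  Real.sum_mul_le_sqrt_mul_sqrt _ _ _

lemma norm_dotProduct_le (p q : Fin n → ℍ[ℝ]) : ‖p ⬝ᵥ q‖ ≤ qVecNorm p * qVecNorm q :=
  (norm_sum_le _ _).trans <| by simpa only [norm_mul] using sum_norm_mul_norm_le p q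

lemma norm_sum_mul_mul_le (p q : Fin n → ℍ[ℝ]) (s : ℍ[ℝ]) :
    ‖∑ i, p i * s * q i‖ ≤ qVecNorm p * ‖s‖ * qVecNorm q := by
  calc ‖∑ i, p i * s * q i‖ ≤ ∑ i, ‖s‖ * (‖p i‖ * ‖q i‖) :=
        (norm_sum_le _ _).trans_eq <| by simp only [norm_mul]; congr! 1; ring
    _ ≤ ‖s‖ * (qVecNorm p * qVecNorm q) := by
        rw [← mul_sum]; exact mul_le_mul_of_nonneg_left (sum_norm_mul_norm_le p q) (norm_nonneg s)
    _ = qVecNorm p * ‖s‖ * qVecNorm q := by ring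

lemma qVecNorm_col_of_mem_unitary {U : Matrix (Fin n) (Fin n) ℍ[ℝ]}
    (hU : U ∈ unitary (Matrix (Fin n) (Fin n) ℍ[ℝ])) (k : Fin n) : qVecNorm (Uᵀ k) = 1 := by
  have h : ((qVecNorm (Uᵀ k) ^ 2 : ℝ) : ℍ[ℝ]) = 1 := by
    rw [← star_dotProduct_self]
    simpa [mul_apply, dotProduct] using congrFun (congrFun hU.1 k) k
  have h' : qVecNorm (Uᵀ k) ^ 2 = 1 := Quaternion.coe_injective h
  nlinarith [qVecNorm_nonneg (Uᵀ k)]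

end VecNorm

section OpNorm

variable {m n : ℕ}

lemma exists_qVecNorm_mulVec_le (A : Matrix (Fin m) (Fin n) ℍ[ℝ]) :
    ∃ C, ∀ x, qVecNorm (A *ᵥ x) ≤ C * qVecNorm x := by
  let f : PiLp 2 (fun _ : Fin n => ℍ[ℝ]) →ₗ[ℝ] PiLp 2 (fun _ : Fin m => ℍ[ℝ]) :=
    { toFun := fun x => WithLp.toLp 2 (A *ᵥ x.ofLp)
      map_add' := fun x y => by simp [mulVec_add]
      map_smul' := fun r x => by simp [mulVec_smul] }
  refine ⟨‖LinearMap.toContinuousLinearMap f‖, fun x => ?_⟩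
  rw [qVecNorm_eq_norm_toLp, qVecNorm_eq_norm_toLp]
  exact (LinearMap.toContinuousLinearMap f).le_opNorm (WithLp.toLp 2 x)

lemma qOpNorm_nonneg (A : Matrix (Fin m) (Fin n) ℍ[ℝ]) : 0 ≤ qOpNorm A :=
  Real.sSup_nonneg <| by
    rintro c ⟨x, -, rfl⟩
    exact div_nonneg (qVecNorm_nonneg _) (qVecNorm_nonneg _)

lemma qVecNorm_mulVec_le (A : Matrix (Fin m) (Fin n) ℍ[ℝ]) (x : Fin n → ℍ[ℝ]) :
    qVecNorm (A *ᵥ x) ≤ qOpNorm A * qVecNorm x := by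
  rcases eq_or_ne x 0 with rfl | hx
  · simp [qVecNorm]
  have hbdd : BddAbove
      {c : ℝ | ∃ x : Fin n → ℍ[ℝ], x ≠ 0 ∧ c = qVecNorm (A *ᵥ x) / qVecNorm x} := by
    obtain ⟨C, hC⟩ := exists_qVecNorm_mulVec_le A
    refine ⟨C, ?_⟩
    rintro c ⟨y, hy, rfl⟩
    exact (div_le_iff₀ (qVecNorm_pos hy)).2 (hC y)
  rw [← div_le_iff₀ (qVecNorm_pos hx)]
  exact le_csSup hbdd ⟨x, hx, rfl⟩

lemma qVecNorm_conjTranspose_mulVec_le (A : Matrix (Fin m) (Fin n) ℍ[ℝ]) (x : Fin m → ℍ[ℝ]) :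
    qVecNorm (Aᴴ *ᵥ x) ≤ qOpNorm A * qVecNorm x := by
  set s := Aᴴ *ᵥ x
  have key : qVecNorm s ^ 2 ≤ qVecNorm x * (qOpNorm A * qVecNorm s) :=
    calc qVecNorm s ^ 2 = ‖star s ⬝ᵥ s‖ := by
          rw [star_dotProduct_self, Quaternion.norm_coe, Real.norm_of_nonneg (sq_nonneg _)]
      _ = ‖star x ⬝ᵥ A *ᵥ s‖ := by
          rw [star_mulVec, conjTranspose_conjTranspose, ← dotProduct_mulVec]
      _ ≤ qVecNorm x * (qOpNorm A * qVecNorm s) := by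
          refine (norm_dotProduct_le _ _).trans ?_
          rw [qVecNorm_star]
          exact mul_le_mul_of_nonneg_left (qVecNorm_mulVec_le A s) (qVecNorm_nonneg x)
  rcases (qVecNorm_nonneg s).eq_or_lt with hs | hs
  · rw [← hs]; exact mul_nonneg (qOpNorm_nonneg A) (qVecNorm_nonneg x)
  · nlinarith

end OpNorm

lemma trace_mul_mul_eq_sum {m n p : ℕ} (C : Matrix (Fin n) (Fin m) ℍ[ℝ])
    (S : Matrix (Fin m) (Fin p) ℍ[ℝ]) (W : Matrix (Fin p) (Fin n) ℍ[ℝ]) :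
    trace (C * S * W) = ∑ k, ∑ l, ∑ j, C j k * S k l * W l j := by
  simp only [trace, Matrix.diag, mul_apply, sum_mul]
  rw [sum_comm_cycle]
  exact sum_congr rfl fun _ _ => sum_comm

lemma sum_sum_ite_val_eq_sum_range_min {α : Type*} [AddCommMonoid α] (M N : ℕ) (f : ℕ → α) :
    ∑ k : Fin M, ∑ l : Fin N, (if (k : ℕ) = l then f k else 0) = ∑ t ∈ range (min M N), f t := by
  have h_inner : ∀ k : ℕ, ∑ l : Fin N, (if k = l then f k else 0) = if k < N then f k else 0 := by
    intro k
    rw [Fin.sum_univ_eq_sum_range (fun l => if k = l then f k else 0), sum_ite_eq,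
      if_congr mem_range rfl rfl]
  simp_rw [h_inner]
  rw [Fin.sum_univ_eq_sum_range (fun k => if k < N then f k else 0), ← sum_filter]
  congr 1
  ext t
  simp

lemma norm_trace_mul_mul_le {m n p : ℕ} (C : Matrix (Fin n) (Fin m) ℍ[ℝ])
    (S : Matrix (Fin m) (Fin p) ℍ[ℝ]) (W : Matrix (Fin p) (Fin n) ℍ[ℝ]) :
    ‖trace (C * S * W)‖ ≤ ∑ k, ∑ l, qVecNorm (Cᵀ k) * ‖S k l‖ * qVecNorm (W l) := by
  rw [trace_mul_mul_eq_sum]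
  refine (norm_sum_le _ _).trans <| sum_le_sum fun k _ => (norm_sum_le _ _).trans <|
    sum_le_sum fun l _ => norm_sum_mul_mul_le (Cᵀ k) (W l) (S k l)

lemma norm_trace_conjTranspose_mul_le {m n : ℕ} (A : Matrix (Fin m) (Fin n) ℍ[ℝ])
    {U : Matrix (Fin m) (Fin m) ℍ[ℝ]} {V : Matrix (Fin n) (Fin n) ℍ[ℝ]}
    (hU : U ∈ unitary (Matrix (Fin m) (Fin m) ℍ[ℝ]))
    (hV : V ∈ unitary (Matrix (Fin n) (Fin n) ℍ[ℝ])) (S : Matrix (Fin m) (Fin n) ℍ[ℝ]) :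
    ‖trace (Aᴴ * (U * S * Vᴴ))‖ ≤ qOpNorm A * ∑ k, ∑ l, ‖S k l‖ := by
  have h_col : ∀ k, qVecNorm ((Aᴴ * U)ᵀ k) ≤ qOpNorm A := fun k =>
    calc qVecNorm ((Aᴴ * U)ᵀ k) = qVecNorm (Aᴴ *ᵥ Uᵀ k) := rfl
      _ ≤ qOpNorm A * qVecNorm (Uᵀ k) := qVecNorm_conjTranspose_mulVec_le A _
      _ = qOpNorm A := by rw [qVecNorm_col_of_mem_unitary hU k, mul_one]
  have h_row : ∀ l, qVecNorm (Vᴴ l) = 1 := fun l => by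
    rw [show Vᴴ l = star (Vᵀ l) from rfl, qVecNorm_star, qVecNorm_col_of_mem_unitary hV l]
  rw [← Matrix.mul_assoc, ← Matrix.mul_assoc, mul_sum]
  refine (norm_trace_mul_mul_le _ _ _).trans <| sum_le_sum fun k _ => ?_
  rw [mul_sum]
  refine sum_le_sum fun l _ => ?_
  rw [h_row, mul_one]
  exact mul_le_mul_of_nonneg_right (h_col k) (norm_nonneg _)

/-- For quaternion matrices `A, B ∈ ℚ^{M×N}`, `|⟨A,B⟩| ≤ ‖A‖_op · ‖B‖_*`, where
`⟨A,B⟩ = Tr(Aᴴ B)` and the nuclear norm of `B` is the sum `∑ σ i` of the singular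
values in a quaternion SVD `B = U Σ Vᴴ`. -/
theorem stmt1 (M N : ℕ) (A B : Matrix (Fin M) (Fin N) ℍ[ℝ])
    (U : Matrix (Fin M) (Fin M) ℍ[ℝ]) (V : Matrix (Fin N) (Fin N) ℍ[ℝ])
    (σ : ℕ → ℝ) (S : Matrix (Fin M) (Fin N) ℍ[ℝ])
    (hU : U ∈ unitary (Matrix (Fin M) (Fin M) ℍ[ℝ]))
    (hV : V ∈ unitary (Matrix (Fin N) (Fin N) ℍ[ℝ]))
    (hσ : ∀ i, 0 ≤ σ i)
    (hS : ∀ i j, S i j = if (i : ℕ) = (j : ℕ) then ((σ i : ℝ) : ℍ[ℝ]) else 0)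
    (hB : B = U * S * Vᴴ) :
    ‖Matrix.trace (Aᴴ * B)‖ ≤ qOpNorm A * ∑ i ∈ range (min M N), σ i := by
  have h_norm_S : ∀ i j, ‖S i j‖ = if (i : ℕ) = (j : ℕ) then σ i else 0 := fun i j => by
    rw [hS]
    split_ifs
    · rw [Quaternion.norm_coe, Real.norm_of_nonneg (hσ i)]
    · exact norm_zero
  calc ‖trace (Aᴴ * B)‖ ≤ qOpNorm A * ∑ k, ∑ l, ‖S k l‖ :=
        hB ▸ norm_trace_conjTranspose_mul_le A hU hV S
    _ = qOpNorm A * ∑ i ∈ range (min M N), σ i := by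
        simp_rw [h_norm_S, sum_sum_ite_val_eq_sum_range_min]
end

section
/- Let A = A₀ + A₁i + A₂j + A₃k be a quaternion matrix with real component matrices A₀, A₁, A₂, A₃ ∈ ℝ^{M×N}. Then ||A||_* ≥ ||A₀ + A₁i||_* ≥ ||A₀||_*, where the middle term is the nuclear norm of the complex matrix A₀ + A₁i. -/
/-!
If `P, Q` are unitary and `Σ` is rectangular diagonal with nonnegative entries `σᵢ`, then
`Re tr (P Σ Q) = ∑ᵢ σᵢ Re ∑ₖ Pₖᵢ Qᵢₖ ≤ ∑ᵢ σᵢ`, since by Cauchy–Schwarz the unit column `i` of `P`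
paired with the unit row `i` of `Q` contributes at most `1`.

Let `𝕜 ⊆ 𝕜'` be one of `ℝ ⊆ ℂ` or `ℂ ⊆ ℍ`, and `π : 𝕜' → 𝕜` the real, resp. complex, part,
which is `𝕜`-bilinear: `π (a q b) = a π(q) b`. If `π(A') = A = U Σ Vᴴ` over `𝕜` and
`A' = U' Σ' V'ᴴ` over `𝕜'`, then
`tr Σ = Re tr (Uᴴ A V) = Re tr (Uᴴ A' V) = Re tr ((Uᴴ U') Σ' (V'ᴴ V)) ≤ tr Σ'`.
-/

open Quaternion Matrix Finset

/-- The real part of `ℝ`, `ℂ` and `ℍ`, axiomatised by what the trace estimate uses. -/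
class RealPart (𝕜 : Type*) [NormedRing 𝕜] [StarRing 𝕜] [Module ℝ 𝕜] where
  re : 𝕜 →ₗ[ℝ] ℝ
  re_one : re 1 = 1
  re_le_norm (x : 𝕜) : re x ≤ ‖x‖
  re_star_mul_self (x : 𝕜) : re (star x * x) = ‖x‖ ^ 2

namespace RealPart

noncomputable instance {K : Type*} [RCLike K] : RealPart K where
  re := RCLike.reLm
  re_one := by simp
  re_le_norm := RCLike.re_le_norm
  re_star_mul_self x := by
    rw [RCLike.reLm_coe, RCLike.star_def, RCLike.conj_mul, ← RCLike.ofReal_pow, RCLike.ofReal_re]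

instance : RealPart ℍ[ℝ] where
  re := QuaternionAlgebra.reₗ _ _ _
  re_one := rfl
  re_le_norm x := by
    calc x.re = inner ℝ x 1 := by simp [inner_def]
      _ ≤ ‖x‖ * ‖(1 : ℍ[ℝ])‖ := real_inner_le_norm _ _
      _ = ‖x‖ := by rw [norm_one, mul_one]
  re_star_mul_self x := by
    show (star x * x).re = _
    rw [star_mul_self, re_coe, normSq_eq_norm_mul_self, sq]

theorem re_algebraMap {𝕜 : Type*} [NormedRing 𝕜] [StarRing 𝕜] [NormedAlgebra ℝ 𝕜] [RealPart 𝕜]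
    (t : ℝ) : re (algebraMap ℝ 𝕜 t) = t := by
  rw [Algebra.algebraMap_eq_smul_one, map_smul, re_one, smul_eq_mul, mul_one]

end RealPart

theorem sum_comp_le_sum_of_injective {ι κ R : Type*} [Fintype ι] [Fintype κ] [AddCommMonoid R]
    [Preorder R] [AddLeftMono R] {e : ι → κ} (he : Function.Injective e) {f : κ → R}
    (hf : ∀ b, 0 ≤ f b) : ∑ k, f (e k) ≤ ∑ b, f b :=
  (sum_map univ ⟨e, he⟩ f).symm.trans_le (sum_le_univ_sum_of_nonneg hf)

namespace Matrix

section RectDiagonal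

variable {R : Type*} {M N : ℕ}

def rectDiagonal [Zero R] (d : ℕ → R) : Matrix (Fin M) (Fin N) R :=
  fun i j => if (i : ℕ) = j then d i else 0

def diagSum [AddCommMonoid R] (A : Matrix (Fin M) (Fin N) R) : R :=
  ∑ k : Fin (min M N), A (Fin.castLE (min_le_left M N) k) (Fin.castLE (min_le_right M N) k)

theorem sum_sum_ite_val_eq_sum_castLE [AddCommMonoid R] (f : Fin M → Fin N → R) :
    ∑ a : Fin M, ∑ b : Fin N, (if (a : ℕ) = b then f a b else 0) =
      ∑ k : Fin (min M N), f (Fin.castLE (min_le_left M N) k) (Fin.castLE (min_le_right M N) k) := by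
  have hdiag : univ.filter (fun p : Fin M × Fin N => (p.1 : ℕ) = p.2) =
      univ.image fun k : Fin (min M N) =>
        (Fin.castLE (min_le_left M N) k, Fin.castLE (min_le_right M N) k) := by
    ext ⟨a, b⟩
    simp only [mem_filter, mem_univ, true_and, mem_image, Prod.mk.injEq]
    constructor
    · intro h
      exact ⟨⟨a, lt_min a.2 (h ▸ b.2)⟩, rfl, Fin.ext h⟩
    · rintro ⟨k, rfl, rfl⟩
      rfl
  rw [← Fintype.sum_prod_type' (f := fun (a : Fin M) (b : Fin N) => if (a : ℕ) = b then f a b else 0),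
    ← sum_filter, hdiag, sum_image]
  intro k _ l _ h
  exact Fin.castLE_injective (min_le_left M N) (Prod.ext_iff.mp h).1

theorem diagSum_map {S : Type*} [AddCommMonoid R] [AddCommMonoid S] (f : R →+ S)
    (A : Matrix (Fin M) (Fin N) R) : diagSum (A.map f) = f (diagSum A) :=
  (map_sum f _ _).symm

theorem diagSum_rectDiagonal [AddCommMonoid R] (d : ℕ → R) :
    diagSum (rectDiagonal d : Matrix (Fin M) (Fin N) R) = ∑ k ∈ range (min M N), d k := by
  simp [diagSum, rectDiagonal, Fin.sum_univ_eq_sum_range d]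

theorem mul_rectDiagonal_mul_apply [NonUnitalNonAssocSemiring R] {l o : Type*} [Fintype l]
    [Fintype o] (P : Matrix l (Fin M) R) (d : ℕ → R) (Q : Matrix (Fin N) o R) (i : l) (j : o) :
    (P * (rectDiagonal d : Matrix (Fin M) (Fin N) R) * Q) i j = ∑ k : Fin (min M N),
      P i (Fin.castLE (min_le_left M N) k) * d k * Q (Fin.castLE (min_le_right M N) k) j := by
  refine Eq.trans ?_ (sum_sum_ite_val_eq_sum_castLE fun a b => P i a * d a * Q b j)
  simp only [mul_apply, sum_mul, rectDiagonal, mul_ite, ite_mul, mul_zero, zero_mul]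
  exact sum_comm

end RectDiagonal

section RealPart

variable {𝕜 : Type*} [NormedRing 𝕜] [StarRing 𝕜] [NormedAlgebra ℝ 𝕜] [RealPart 𝕜]
  {m n : Type*} [Fintype m] [Fintype n] [DecidableEq m] [DecidableEq n]

open RealPart

theorem sum_norm_sq_col_eq_one {U : Matrix n n 𝕜} (hU : U ∈ unitary (Matrix n n 𝕜)) (c : n) :
    ∑ a, ‖U a c‖ ^ 2 = 1 := by
  have h := congrArg (fun X : Matrix n n 𝕜 => re (X c c)) (Unitary.star_mul_self_of_mem hU)
  simpa only [mul_apply, star_apply, map_sum, re_star_mul_self, one_apply_eq,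
    RealPart.re_one] using h

theorem sum_norm_sq_row_eq_one [NormedStarGroup 𝕜] {U : Matrix n n 𝕜}
    (hU : U ∈ unitary (Matrix n n 𝕜)) (c : n) : ∑ b, ‖U c b‖ ^ 2 = 1 := by
  simpa only [star_apply, _root_.norm_star] using sum_norm_sq_col_eq_one (Unitary.star_mem hU) c

theorem sum_re_mul_le_one [NormedStarGroup 𝕜] {ι : Type*} [Fintype ι] {P : Matrix m m 𝕜}
    {Q : Matrix n n 𝕜} (hP : P ∈ unitary (Matrix m m 𝕜)) (hQ : Q ∈ unitary (Matrix n n 𝕜))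
    {e₁ : ι → m} {e₂ : ι → n} (he₁ : Function.Injective e₁) (he₂ : Function.Injective e₂)
    (c : m) (d : n) : ∑ k, re (P (e₁ k) c * Q d (e₂ k)) ≤ 1 := by
  have hP' : √(∑ k, ‖P (e₁ k) c‖ ^ 2) ≤ 1 := Real.sqrt_le_one.mpr <|
    (sum_comp_le_sum_of_injective he₁ fun _ => sq_nonneg _).trans_eq (sum_norm_sq_col_eq_one hP c)
  have hQ' : √(∑ k, ‖Q d (e₂ k)‖ ^ 2) ≤ 1 := Real.sqrt_le_one.mpr <|
    (sum_comp_le_sum_of_injective he₂ fun _ => sq_nonneg _).trans_eq (sum_norm_sq_row_eq_one hQ d)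
  calc ∑ k, re (P (e₁ k) c * Q d (e₂ k))
      ≤ ∑ k, ‖P (e₁ k) c‖ * ‖Q d (e₂ k)‖ :=
        sum_le_sum fun k _ => (re_le_norm _).trans (norm_mul_le _ _)
    _ ≤ √(∑ k, ‖P (e₁ k) c‖ ^ 2) * √(∑ k, ‖Q d (e₂ k)‖ ^ 2) := Real.sum_mul_le_sqrt_mul_sqrt _ _ _
    _ ≤ 1 := mul_le_one₀ hP' (Real.sqrt_nonneg _) hQ'

theorem re_diagSum_mul_rectDiagonal_mul_le [NormedStarGroup 𝕜] {M N : ℕ}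
    {P : Matrix (Fin M) (Fin M) 𝕜} {Q : Matrix (Fin N) (Fin N) 𝕜}
    (hP : P ∈ unitary (Matrix (Fin M) (Fin M) 𝕜)) (hQ : Q ∈ unitary (Matrix (Fin N) (Fin N) 𝕜))
    {σ : ℕ → ℝ} (hσ : ∀ i, 0 ≤ σ i) :
    re (diagSum (P * (rectDiagonal fun i => algebraMap ℝ 𝕜 (σ i) : Matrix (Fin M) (Fin N) 𝕜) * Q))
      ≤ ∑ i ∈ range (min M N), σ i := by
  set ι₁ := Fin.castLE (min_le_left M N)
  set ι₂ := Fin.castLE (min_le_right M N)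
  have hsmul (x y : 𝕜) (t : ℝ) : x * algebraMap ℝ 𝕜 t * y = t • (x * y) := by
    rw [← Algebra.commutes, ← Algebra.smul_def, smul_mul_assoc]
  calc re (diagSum (P * (rectDiagonal fun i => algebraMap ℝ 𝕜 (σ i) :
          Matrix (Fin M) (Fin N) 𝕜) * Q))
      = ∑ l : Fin (min M N), σ l * ∑ k, re (P (ι₁ k) (ι₁ l) * Q (ι₂ l) (ι₂ k)) := by
        simp only [diagSum, mul_rectDiagonal_mul_apply, hsmul, map_sum, map_smul, smul_eq_mul,
          mul_sum]
        exact sum_comm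
    _ ≤ ∑ l : Fin (min M N), σ l * 1 := by
        gcongr with l
        · exact hσ l
        · exact sum_re_mul_le_one hP hQ (Fin.castLE_injective _) (Fin.castLE_injective _) _ _
    _ = ∑ i ∈ range (min M N), σ i := by
        simp only [mul_one, Fin.sum_univ_eq_sum_range σ]

end RealPart

variable {𝕜 𝕜' : Type*}

theorem map_mem_unitary [Ring 𝕜] [StarRing 𝕜] [Ring 𝕜'] [StarRing 𝕜'] {n : Type*} [Fintype n]
    [DecidableEq n] (f : 𝕜 →+* 𝕜') (hf : ∀ a, f (star a) = star (f a)) {U : Matrix n n 𝕜}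
    (hU : U ∈ unitary (Matrix n n 𝕜)) : U.map f ∈ unitary (Matrix n n 𝕜') := by
  have hstar : star (U.map f) = (star U).map f := (conjTranspose_map f fun a => hf a).symm
  constructor
  · rw [hstar, ← Matrix.map_mul, Unitary.star_mul_self_of_mem hU,
      Matrix.map_one f f.map_zero f.map_one]
  · rw [hstar, ← Matrix.map_mul, Unitary.mul_star_self_of_mem hU,
      Matrix.map_one f f.map_zero f.map_one]

theorem map_mul_map_mul_map [Semiring 𝕜] [Semiring 𝕜'] {l m n o : Type*} [Fintype m] [Fintype n]
    (ι : 𝕜 →+* 𝕜') (π : 𝕜' →+ 𝕜) (hπ : ∀ a q b, π (ι a * q * ι b) = a * π q * b)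
    (P : Matrix l m 𝕜) (A : Matrix m n 𝕜') (Q : Matrix n o 𝕜) :
    (P.map ι * A * Q.map ι).map π = P * A.map π * Q := by
  ext i j
  simp only [map_apply, mul_apply, sum_mul, map_sum, hπ]

open RealPart in
theorem sum_le_sum_of_svd_of_map_eq
    [NormedRing 𝕜] [StarRing 𝕜] [NormedAlgebra ℝ 𝕜] [RealPart 𝕜]
    [NormedRing 𝕜'] [StarRing 𝕜'] [NormedAlgebra ℝ 𝕜'] [RealPart 𝕜'] [NormedStarGroup 𝕜']
    (ι : 𝕜 →+* 𝕜') (hι : ∀ a, ι (star a) = star (ι a))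
    (π : 𝕜' →+ 𝕜) (hπ : ∀ a q b, π (ι a * q * ι b) = a * π q * b) (hre : ∀ q, re (π q) = re q)
    {M N : ℕ} {A : Matrix (Fin M) (Fin N) 𝕜'}
    {U : Matrix (Fin M) (Fin M) 𝕜} {V : Matrix (Fin N) (Fin N) 𝕜} {σ : ℕ → ℝ}
    (hU : U ∈ unitary (Matrix (Fin M) (Fin M) 𝕜)) (hV : V ∈ unitary (Matrix (Fin N) (Fin N) 𝕜))
    (hA : A.map π =
      U * (rectDiagonal fun i => algebraMap ℝ 𝕜 (σ i) : Matrix (Fin M) (Fin N) 𝕜) * Vᴴ)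
    {U' : Matrix (Fin M) (Fin M) 𝕜'} {V' : Matrix (Fin N) (Fin N) 𝕜'} {σ' : ℕ → ℝ}
    (hU' : U' ∈ unitary (Matrix (Fin M) (Fin M) 𝕜'))
    (hV' : V' ∈ unitary (Matrix (Fin N) (Fin N) 𝕜')) (hσ' : ∀ i, 0 ≤ σ' i)
    (hA' : A =
      U' * (rectDiagonal fun i => algebraMap ℝ 𝕜' (σ' i) : Matrix (Fin M) (Fin N) 𝕜') * V'ᴴ) :
    ∑ i ∈ range (min M N), σ i ≤ ∑ i ∈ range (min M N), σ' i := by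
  have hS : Uᴴ * A.map π * V = rectDiagonal fun i => algebraMap ℝ 𝕜 (σ i) := by
    rw [hA, ← star_eq_conjTranspose, ← star_eq_conjTranspose]
    simp only [Matrix.mul_assoc, Unitary.star_mul_self_of_mem hV, Matrix.mul_one]
    rw [← Matrix.mul_assoc, Unitary.star_mul_self_of_mem hU, Matrix.one_mul]
  calc ∑ i ∈ range (min M N), σ i = re (diagSum (Uᴴ * A.map π * V)) := by
        rw [hS, diagSum_rectDiagonal, ← map_sum, re_algebraMap]
    _ = re (diagSum (Uᴴ.map ι * U' *
          (rectDiagonal fun i => algebraMap ℝ 𝕜' (σ' i) : Matrix (Fin M) (Fin N) 𝕜') *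
          (V'ᴴ * V.map ι))) := by
        rw [← map_mul_map_mul_map ι π hπ, diagSum_map, hre, hA']
        simp only [Matrix.mul_assoc]
    _ ≤ ∑ i ∈ range (min M N), σ' i :=
        re_diagSum_mul_rectDiagonal_mul_le
          (mul_mem (map_mem_unitary ι hι (Unitary.star_mem hU)) hU')
          (mul_mem (Unitary.star_mem hV') (map_mem_unitary ι hι hV)) hσ'

end Matrix

namespace Quaternion

@[simps]
def complexPart : ℍ[ℝ] →+ ℂ where
  toFun q := ⟨q.re, q.imI⟩
  map_zero' := rfl
  map_add' _ _ := rfl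

/-- Writing `q = c + d j` with `c d : ℂ`, we have `z (d j) w = z d w̄ j`, so only `c` contributes. -/
theorem complexPart_coeComplex_mul_mul (z : ℂ) (q : ℍ[ℝ]) (w : ℂ) :
    complexPart (coeComplex z * q * coeComplex w) = z * complexPart q * w := by
  apply Complex.ext <;> simp [Complex.mul_re, Complex.mul_im]

theorem coeComplex_star (z : ℂ) : coeComplex (star z) = star (coeComplex z) := by
  ext <;> simp

end Quaternion

theorem stmt2_general (M N : ℕ)
    (A0 A1 A2 A3 : Matrix (Fin M) (Fin N) ℝ)
    (A : Matrix (Fin M) (Fin N) ℍ[ℝ])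
    (hA : ∀ i j, A i j = ⟨A0 i j, A1 i j, A2 i j, A3 i j⟩)
    (B : Matrix (Fin M) (Fin N) ℂ)
    (hB : ∀ i j, B i j = ⟨A0 i j, A1 i j⟩)
    -- quaternion SVD of A
    (UQ : Matrix (Fin M) (Fin M) ℍ[ℝ]) (VQ : Matrix (Fin N) (Fin N) ℍ[ℝ])
    (σQ : ℕ → ℝ) (SQ : Matrix (Fin M) (Fin N) ℍ[ℝ])
    (hUQ : UQ ∈ unitary (Matrix (Fin M) (Fin M) ℍ[ℝ]))
    (hVQ : VQ ∈ unitary (Matrix (Fin N) (Fin N) ℍ[ℝ]))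
    (hσQ : ∀ i, 0 ≤ σQ i)
    (hSQ : ∀ i j, SQ i j = if (i : ℕ) = (j : ℕ) then ((σQ i : ℝ) : ℍ[ℝ]) else 0)
    (hAQ : A = UQ * SQ * VQᴴ)
    -- complex SVD of B = A₀ + A₁ i
    (UC : Matrix (Fin M) (Fin M) ℂ) (VC : Matrix (Fin N) (Fin N) ℂ)
    (σC : ℕ → ℝ) (SC : Matrix (Fin M) (Fin N) ℂ)
    (hUC : UC ∈ unitary (Matrix (Fin M) (Fin M) ℂ))
    (hVC : VC ∈ unitary (Matrix (Fin N) (Fin N) ℂ))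
    (hσC : ∀ i, 0 ≤ σC i)
    (hSC : ∀ i j, SC i j = if (i : ℕ) = (j : ℕ) then ((σC i : ℝ) : ℂ) else 0)
    (hBC : B = UC * SC * VCᴴ)
    -- real SVD of A₀
    (UR : Matrix (Fin M) (Fin M) ℝ) (VR : Matrix (Fin N) (Fin N) ℝ)
    (σR : ℕ → ℝ) (SR : Matrix (Fin M) (Fin N) ℝ)
    (hUR : UR ∈ unitary (Matrix (Fin M) (Fin M) ℝ))
    (hVR : VR ∈ unitary (Matrix (Fin N) (Fin N) ℝ))
    (hSR : ∀ i j, SR i j = if (i : ℕ) = (j : ℕ) then σR i else 0)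
    (hAR : A0 = UR * SR * VRᴴ) :
    ∑ i ∈ range (min M N), σR i ≤ ∑ i ∈ range (min M N), σC i ∧
      ∑ i ∈ range (min M N), σC i ≤ ∑ i ∈ range (min M N), σQ i := by
  have hSR' : SR = rectDiagonal fun i => algebraMap ℝ ℝ (σR i) := Matrix.ext hSR
  have hSC' : SC = rectDiagonal fun i => algebraMap ℝ ℂ (σC i) := Matrix.ext hSC
  have hSQ' : SQ = rectDiagonal fun i => algebraMap ℝ ℍ[ℝ] (σQ i) := Matrix.ext hSQ
  constructor
  · refine sum_le_sum_of_svd_of_map_eq Complex.ofRealHom (fun a => (Complex.conj_ofReal a).symm)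
      Complex.reAddGroupHom (fun a z b => by simp [Complex.mul_re]) (fun _ => rfl)
      hUR hVR ?_ hUC hVC hσC (hSC' ▸ hBC)
    rw [← hSR', ← hAR]
    ext i j
    rw [map_apply, hB]
    rfl
  · refine sum_le_sum_of_svd_of_map_eq Quaternion.ofComplex.toRingHom coeComplex_star
      complexPart complexPart_coeComplex_mul_mul (fun _ => rfl)
      hUC hVC ?_ hUQ hVQ hσQ (hSQ' ▸ hAQ)
    rw [← hSC', ← hBC]
    ext i j
    rw [map_apply, hA, hB]
    rfl

/-- Let `A = A₀ + A₁i + A₂j + A₃k` be a quaternion matrix with real component matrices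
`A₀,...,A₃`.  Then `‖A‖_* ≥ ‖A₀ + A₁i‖_* ≥ ‖A₀‖_*`, where the three nuclear norms are the
sums of the singular values from a quaternion SVD of `A`, a complex SVD of `A₀ + A₁i`,
and a real SVD of `A₀`, respectively. -/
theorem stmt2 (M N : ℕ)
    (A0 A1 A2 A3 : Matrix (Fin M) (Fin N) ℝ)
    (A : Matrix (Fin M) (Fin N) ℍ[ℝ])
    (hA : ∀ i j, A i j = ⟨A0 i j, A1 i j, A2 i j, A3 i j⟩)
    (B : Matrix (Fin M) (Fin N) ℂ)
    (hB : ∀ i j, B i j = ⟨A0 i j, A1 i j⟩)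
    -- quaternion SVD of A
    (UQ : Matrix (Fin M) (Fin M) ℍ[ℝ]) (VQ : Matrix (Fin N) (Fin N) ℍ[ℝ])
    (σQ : ℕ → ℝ) (SQ : Matrix (Fin M) (Fin N) ℍ[ℝ])
    (hUQ : UQ ∈ unitary (Matrix (Fin M) (Fin M) ℍ[ℝ]))
    (hVQ : VQ ∈ unitary (Matrix (Fin N) (Fin N) ℍ[ℝ]))
    (hσQ : ∀ i, 0 ≤ σQ i)
    (hSQ : ∀ i j, SQ i j = if (i : ℕ) = (j : ℕ) then ((σQ i : ℝ) : ℍ[ℝ]) else 0)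
    (hAQ : A = UQ * SQ * VQᴴ)
    -- complex SVD of B = A₀ + A₁ i
    (UC : Matrix (Fin M) (Fin M) ℂ) (VC : Matrix (Fin N) (Fin N) ℂ)
    (σC : ℕ → ℝ) (SC : Matrix (Fin M) (Fin N) ℂ)
    (hUC : UC ∈ unitary (Matrix (Fin M) (Fin M) ℂ))
    (hVC : VC ∈ unitary (Matrix (Fin N) (Fin N) ℂ))
    (hσC : ∀ i, 0 ≤ σC i)
    (hSC : ∀ i j, SC i j = if (i : ℕ) = (j : ℕ) then ((σC i : ℝ) : ℂ) else 0)
    (hBC : B = UC * SC * VCᴴ)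
    -- real SVD of A₀
    (UR : Matrix (Fin M) (Fin M) ℝ) (VR : Matrix (Fin N) (Fin N) ℝ)
    (σR : ℕ → ℝ) (SR : Matrix (Fin M) (Fin N) ℝ)
    (hUR : UR ∈ unitary (Matrix (Fin M) (Fin M) ℝ))
    (hVR : VR ∈ unitary (Matrix (Fin N) (Fin N) ℝ))
    (hσR : ∀ i, 0 ≤ σR i)
    (hSR : ∀ i j, SR i j = if (i : ℕ) = (j : ℕ) then σR i else 0)
    (hAR : A0 = UR * SR * VRᴴ) :
    ∑ i ∈ range (min M N), σR i ≤ ∑ i ∈ range (min M N), σC i ∧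
      ∑ i ∈ range (min M N), σC i ≤ ∑ i ∈ range (min M N), σQ i :=
  stmt2_general M N A0 A1 A2 A3 A hA B hB UQ VQ σQ SQ hUQ hVQ hσQ hSQ hAQ UC VC σC SC hUC hVC hσC
    hSC hBC UR VR σR SR hUR hVR hSR hAR
end

section
/- Let A = A₀ + A₁i + A₂j + A₃k be a quaternion matrix with real components A₀,...,A₃ ∈ ℝ^{M×N}, and let ν = (ν₀, ν₁, ν₂, ν₃) ∈ ℝ⁴ be a unit vector. Then ||A||_* ≥ ||ν₀A₀ + ν₁A₁ + ν₂A₂ + ν₃A₃||_*, where the right side is the nuclear norm of a real matrix. -/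
open Quaternion Matrix Finset

/-!
Let `q = ν₀ + ν₁i + ν₂j + ν₃k`, a unit quaternion. Entrywise, `ν₀A₀ + ⋯ + ν₃A₃` is
`⟪q, A⟫ = Re(A q̄)`, a real-linear functional of norm one which commutes with multiplication by
real matrices. Hence `∑ σR`, the diagonal sum of `U_Rᵀ (ν₀A₀ + ⋯ + ν₃A₃) V_R`, equals
`⟪q, t⟫ ≤ |t|`, where `t` is the diagonal sum of `X Σ_Q Y` for the unitary quaternion matrices
`X = U_Rᵀ U_Q` and `Y = V_Qᴴ V_R`. Expanding, `t = ∑ₗ σQₗ ∑ₖ X_{kl} Y_{lk}`, and each inner sum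
has norm at most one by Cauchy–Schwarz applied to a column of `X` and a row of `Y`.
-/

lemma eq_conjTranspose_mul_mul_of_eq_mul_mul {R m n : Type*} [Semiring R] [StarRing R]
    [Fintype m] [Fintype n] [DecidableEq m] [DecidableEq n] {U : Matrix m m R} {V : Matrix n n R}
    {B S : Matrix m n R}
    (hU : U ∈ unitary (Matrix m m R)) (hV : V ∈ unitary (Matrix n n R)) (h : B = U * S * Vᴴ) :
    S = Uᴴ * B * V := by
  have hU1 : Uᴴ * U = 1 := Unitary.star_mul_self_of_mem hU
  have hV1 : Vᴴ * V = 1 := Unitary.star_mul_self_of_mem hV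
  rw [h, ← Matrix.mul_assoc, ← Matrix.mul_assoc, hU1, Matrix.one_mul, Matrix.mul_assoc, hV1,
    Matrix.mul_one]

lemma Quaternion.norm_eq_sqrt (q : ℍ[ℝ]) :
    ‖q‖ = √(q.re ^ 2 + q.imI ^ 2 + q.imJ ^ 2 + q.imK ^ 2) := by
  rw [norm_eq_sqrt_real_inner, inner_self, normSq_def']

lemma Quaternion.inner_eq (q x : ℍ[ℝ]) :
    inner ℝ q x = q.re * x.re + q.imI * x.imI + q.imJ * x.imJ + q.imK * x.imK := by
  rw [inner_def, Quaternion.re_mul, Quaternion.re_star,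
      Quaternion.imI_star, Quaternion.imJ_star, Quaternion.imK_star]
  ring

section
variable {m n D : Type*} [Fintype m] [Fintype n] [Fintype D]

lemma sum_comp_le_sum_of_injective_s3 {e : D → m} (he : Function.Injective e) {g : m → ℝ}
    (hg : 0 ≤ g) : ∑ d, g (e d) ≤ ∑ k, g k := by
  classical
  rw [← Finset.sum_image fun _ _ _ _ h => he h]
  exact sum_le_sum_of_subset_of_nonneg (subset_univ _) fun k _ _ => hg k

lemma mul_single_mul_apply {R : Type*} [Semiring R] [DecidableEq m] [DecidableEq n]
    (X : Matrix m m R) (Y : Matrix n n R) (i : m) (j : n) (c : R) (a : m) (b : n) :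
    (X * single i j c * Y) a b = X a i * c * Y j b := by
  simp [mul_apply, single_apply, ite_and, mul_assoc]

lemma trace_submatrix_mul_sum_single_mul {R : Type*} [Semiring R] [DecidableEq m] [DecidableEq n]
    (e : D → m) (f : D → n) (X : Matrix m m R) (Y : Matrix n n R) (σ : D → R) :
    ((X * (∑ d, single (e d) (f d) (σ d)) * Y).submatrix e f).trace
      = ∑ d, ∑ d', X (e d') (e d) * σ d * Y (f d) (f d') := by
  simp only [trace, diag_apply, submatrix_apply, Matrix.mul_sum, Matrix.sum_mul, Matrix.sum_apply,
    mul_single_mul_apply]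
  exact Finset.sum_comm

lemma map_algebraMap_mul_mul_map_algebraMap {l p K R : Type*} [Fintype p] [CommSemiring K]
    [Semiring R] [Algebra K R] (g : R →ₗ[K] K) (X : Matrix l m K) (A : Matrix m n R)
    (Y : Matrix n p K) :
    (X.map (algebraMap K R) * A * Y.map (algebraMap K R)).map g = X * A.map g * Y := by
  ext i j
  simp [mul_apply, map_sum, ← Algebra.commutes, ← Algebra.smul_def, mul_comm]

variable [DecidableEq m] [DecidableEq n]

lemma map_algebraMap_mem_unitary {X : Matrix m m ℝ} (hX : X ∈ unitary (Matrix m m ℝ)) :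
    X.map (algebraMap ℝ ℍ[ℝ]) ∈ unitary (Matrix m m ℍ[ℝ]) := by
  have hstar : star (X.map (algebraMap ℝ ℍ[ℝ])) = (star X).map (algebraMap ℝ ℍ[ℝ]) :=
    (conjTranspose_map _ fun a => (Quaternion.star_coe a).symm).symm
  rw [Unitary.mem_iff, hstar, ← Matrix.map_mul, ← Matrix.map_mul,
    Unitary.star_mul_self_of_mem hX, Unitary.mul_star_self_of_mem hX,
    Matrix.map_one _ (map_zero _) (map_one _)]
  exact ⟨rfl, rfl⟩

lemma sum_norm_sq_col_of_mem_unitary {X : Matrix m m ℍ[ℝ]}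
    (hX : X ∈ unitary (Matrix m m ℍ[ℝ])) (l : m) : ∑ k, ‖X k l‖ ^ 2 = 1 := by
  have h := congrArg (fun Z : Matrix m m ℍ[ℝ] => Z l l) (Unitary.star_mul_self_of_mem hX)
  simp only [mul_apply, star_apply, Quaternion.star_mul_self, one_apply_eq] at h
  rw [← algebraMap_def, ← map_sum, ← map_one (algebraMap ℝ ℍ[ℝ])] at h
  simpa [sq, normSq_eq_norm_mul_self] using (algebraMap ℝ ℍ[ℝ]).injective h

lemma sum_norm_sq_row_of_mem_unitary {X : Matrix m m ℍ[ℝ]}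
    (hX : X ∈ unitary (Matrix m m ℍ[ℝ])) (l : m) : ∑ k, ‖X l k‖ ^ 2 = 1 := by
  simpa [norm_star] using sum_norm_sq_col_of_mem_unitary (Unitary.star_mem hX) l

lemma norm_sum_mul_le_one_of_mem_unitary {e : D → m} {f : D → n} (he : Function.Injective e)
    (hf : Function.Injective f) {X : Matrix m m ℍ[ℝ]} {Y : Matrix n n ℍ[ℝ]}
    (hX : X ∈ unitary (Matrix m m ℍ[ℝ])) (hY : Y ∈ unitary (Matrix n n ℍ[ℝ])) (l : m) (l' : n) :
    ‖∑ d, X (e d) l * Y l' (f d)‖ ≤ 1 := by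
  have hXl : ∑ d, ‖X (e d) l‖ ^ 2 ≤ 1 :=
    (sum_norm_sq_col_of_mem_unitary hX l).symm ▸
      sum_comp_le_sum_of_injective_s3 he fun k => sq_nonneg ‖X k l‖
  have hYl : ∑ d, ‖Y l' (f d)‖ ^ 2 ≤ 1 :=
    (sum_norm_sq_row_of_mem_unitary hY l').symm ▸
      sum_comp_le_sum_of_injective_s3 hf fun k => sq_nonneg ‖Y l' k‖
  calc ‖∑ d, X (e d) l * Y l' (f d)‖ ≤ ∑ d, ‖X (e d) l‖ * ‖Y l' (f d)‖ := by
        simpa only [norm_mul] using norm_sum_le univ fun d => X (e d) l * Y l' (f d)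
    _ ≤ √(∑ d, ‖X (e d) l‖ ^ 2) * √(∑ d, ‖Y l' (f d)‖ ^ 2) := Real.sum_mul_le_sqrt_mul_sqrt _ _ _
    _ ≤ √1 * √1 := by gcongr
    _ = 1 := by simp

lemma norm_trace_submatrix_mul_sum_single_mul_le {e : D → m} {f : D → n}
    (he : Function.Injective e) (hf : Function.Injective f) {X : Matrix m m ℍ[ℝ]}
    {Y : Matrix n n ℍ[ℝ]} (hX : X ∈ unitary (Matrix m m ℍ[ℝ]))
    (hY : Y ∈ unitary (Matrix n n ℍ[ℝ])) {σ : D → ℝ} (hσ : 0 ≤ σ) :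
    ‖((X * (∑ d, single (e d) (f d) (σ d : ℍ[ℝ])) * Y).submatrix e f).trace‖ ≤ ∑ d, σ d := by
  rw [trace_submatrix_mul_sum_single_mul]
  calc ‖∑ d, ∑ d', X (e d') (e d) * σ d * Y (f d) (f d')‖
      ≤ ∑ d, σ d * ‖∑ d', X (e d') (e d) * Y (f d) (f d')‖ := by
        refine (norm_sum_le _ _).trans (sum_le_sum fun d _ => ?_)
        simp_rw [mul_coe_eq_smul, smul_mul_assoc, ← Finset.smul_sum, norm_smul,
          Real.norm_of_nonneg (hσ d)]
        rfl
    _ ≤ ∑ d, σ d * 1 := by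
        gcongr with d
        · exact hσ d
        · exact norm_sum_mul_le_one_of_mem_unitary he hf hX hY _ _
    _ = ∑ d, σ d := by simp
end

lemma eq_sum_single_castLE {R : Type*} [AddCommMonoid R] {M N : ℕ} (σ : ℕ → R)
    (S : Matrix (Fin M) (Fin N) R) (hS : ∀ i j, S i j = if (i : ℕ) = (j : ℕ) then σ i else 0) :
    S = ∑ d : Fin (min M N),
      single (Fin.castLE (min_le_left M N) d) (Fin.castLE (min_le_right M N) d) (σ d) := by
  ext i j
  rw [hS, Matrix.sum_apply]
  simp only [single_apply, Fin.ext_iff, Fin.val_castLE]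
  split_ifs with h
  · rw [Finset.sum_eq_single ⟨i, lt_min i.2 (h ▸ j.2)⟩
      (fun d _ hd => if_neg fun hdi => hd (Fin.ext hdi.1)) (by simp)]
    simp [h]
  · exact (Finset.sum_eq_zero fun d _ => if_neg fun hd => h (hd.1.symm.trans hd.2)).symm

theorem stmt3_general (M N : ℕ)
    (A0 A1 A2 A3 : Matrix (Fin M) (Fin N) ℝ)
    (A : Matrix (Fin M) (Fin N) ℍ[ℝ])
    (hA : ∀ i j, A i j = ⟨A0 i j, A1 i j, A2 i j, A3 i j⟩)
    (ν0 ν1 ν2 ν3 : ℝ) (hν : ν0 ^ 2 + ν1 ^ 2 + ν2 ^ 2 + ν3 ^ 2 = 1)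
    -- quaternion SVD of A
    (UQ : Matrix (Fin M) (Fin M) ℍ[ℝ]) (VQ : Matrix (Fin N) (Fin N) ℍ[ℝ])
    (σQ : ℕ → ℝ) (SQ : Matrix (Fin M) (Fin N) ℍ[ℝ])
    (hUQ : UQ ∈ unitary (Matrix (Fin M) (Fin M) ℍ[ℝ]))
    (hVQ : VQ ∈ unitary (Matrix (Fin N) (Fin N) ℍ[ℝ]))
    (hσQ : ∀ i, 0 ≤ σQ i)
    (hSQ : ∀ i j, SQ i j = if (i : ℕ) = (j : ℕ) then ((σQ i : ℝ) : ℍ[ℝ]) else 0)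
    (hAQ : A = UQ * SQ * VQᴴ)
    -- real SVD of ν₀A₀ + ν₁A₁ + ν₂A₂ + ν₃A₃
    (UR : Matrix (Fin M) (Fin M) ℝ) (VR : Matrix (Fin N) (Fin N) ℝ)
    (σR : ℕ → ℝ) (SR : Matrix (Fin M) (Fin N) ℝ)
    (hUR : UR ∈ unitary (Matrix (Fin M) (Fin M) ℝ))
    (hVR : VR ∈ unitary (Matrix (Fin N) (Fin N) ℝ))
    (hSR : ∀ i j, SR i j = if (i : ℕ) = (j : ℕ) then σR i else 0)
    (hAR : ν0 • A0 + ν1 • A1 + ν2 • A2 + ν3 • A3 = UR * SR * VRᴴ) :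
    ∑ i ∈ range (min M N), σR i ≤ ∑ i ∈ range (min M N), σQ i := by
  set q : ℍ[ℝ] := ⟨ν0, ν1, ν2, ν3⟩
  have hq : ‖q‖ = 1 := by
    rw [Quaternion.norm_eq_sqrt]
    simp [q, hν]
  have hB : ν0 • A0 + ν1 • A1 + ν2 • A2 + ν3 • A3 = A.map (innerₛₗ ℝ q) := by
    ext i j
    rw [Matrix.map_apply, innerₛₗ_apply_apply, Quaternion.inner_eq, hA]
    simp [q]
  set e : Fin (min M N) → Fin M := Fin.castLE (min_le_left M N)
  set f : Fin (min M N) → Fin N := Fin.castLE (min_le_right M N)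
  set X := URᴴ.map (algebraMap ℝ ℍ[ℝ]) * UQ
  set Y := VQᴴ * VR.map (algebraMap ℝ ℍ[ℝ])
  have hX : X ∈ unitary _ := mul_mem (map_algebraMap_mem_unitary (Unitary.star_mem hUR)) hUQ
  have hY : Y ∈ unitary _ := mul_mem (Unitary.star_mem hVQ) (map_algebraMap_mem_unitary hVR)
  calc ∑ i ∈ range (min M N), σR i = (SR.submatrix e f).trace := by
        simp [← Fin.sum_univ_eq_sum_range, trace, hSR, e, f]
    _ = innerₛₗ ℝ q ((X * SQ * Y).submatrix e f).trace := by
        rw [AddMonoidHom.map_trace, eq_conjTranspose_mul_mul_of_eq_mul_mul hUR hVR hAR, hB,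
          ← map_algebraMap_mul_mul_map_algebraMap, hAQ]
        simp only [X, Y, Matrix.mul_assoc, submatrix_map]
    _ ≤ ‖((X * SQ * Y).submatrix e f).trace‖ := by
        simpa [hq] using real_inner_le_norm q _
    _ ≤ ∑ i ∈ range (min M N), σQ i := by
        rw [eq_sum_single_castLE (fun i => (σQ i : ℍ[ℝ])) SQ hSQ, ← Fin.sum_univ_eq_sum_range]
        exact norm_trace_submatrix_mul_sum_single_mul_le (Fin.castLE_injective _)
          (Fin.castLE_injective _) hX hY fun d => hσQ d

/-- Let `A = A₀ + A₁i + A₂j + A₃k` be a quaternion matrix with real components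
`A₀,...,A₃` and let `ν = (ν₀,ν₁,ν₂,ν₃)` be a unit vector in `ℝ⁴`.  Then
`‖A‖_* ≥ ‖ν₀A₀ + ν₁A₁ + ν₂A₂ + ν₃A₃‖_*`, where the nuclear norms are the sums of the
singular values from a quaternion SVD of `A` and a real SVD of the real matrix
`ν₀A₀ + ν₁A₁ + ν₂A₂ + ν₃A₃`. -/
theorem stmt3 (M N : ℕ)
    (A0 A1 A2 A3 : Matrix (Fin M) (Fin N) ℝ)
    (A : Matrix (Fin M) (Fin N) ℍ[ℝ])
    (hA : ∀ i j, A i j = ⟨A0 i j, A1 i j, A2 i j, A3 i j⟩)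
    (ν0 ν1 ν2 ν3 : ℝ) (hν : ν0 ^ 2 + ν1 ^ 2 + ν2 ^ 2 + ν3 ^ 2 = 1)
    -- quaternion SVD of A
    (UQ : Matrix (Fin M) (Fin M) ℍ[ℝ]) (VQ : Matrix (Fin N) (Fin N) ℍ[ℝ])
    (σQ : ℕ → ℝ) (SQ : Matrix (Fin M) (Fin N) ℍ[ℝ])
    (hUQ : UQ ∈ unitary (Matrix (Fin M) (Fin M) ℍ[ℝ]))
    (hVQ : VQ ∈ unitary (Matrix (Fin N) (Fin N) ℍ[ℝ]))
    (hσQ : ∀ i, 0 ≤ σQ i)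
    (hSQ : ∀ i j, SQ i j = if (i : ℕ) = (j : ℕ) then ((σQ i : ℝ) : ℍ[ℝ]) else 0)
    (hAQ : A = UQ * SQ * VQᴴ)
    -- real SVD of ν₀A₀ + ν₁A₁ + ν₂A₂ + ν₃A₃
    (UR : Matrix (Fin M) (Fin M) ℝ) (VR : Matrix (Fin N) (Fin N) ℝ)
    (σR : ℕ → ℝ) (SR : Matrix (Fin M) (Fin N) ℝ)
    (hUR : UR ∈ unitary (Matrix (Fin M) (Fin M) ℝ))
    (hVR : VR ∈ unitary (Matrix (Fin N) (Fin N) ℝ))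
    (hσR : ∀ i, 0 ≤ σR i)
    (hSR : ∀ i j, SR i j = if (i : ℕ) = (j : ℕ) then σR i else 0)
    (hAR : ν0 • A0 + ν1 • A1 + ν2 • A2 + ν3 • A3 = UR * SR * VRᴴ) :
    ∑ i ∈ range (min M N), σR i ≤ ∑ i ∈ range (min M N), σQ i :=
  stmt3_general M N A0 A1 A2 A3 A hA ν0 ν1 ν2 ν3 hν UQ VQ σQ SQ hUQ hVQ hσQ hSQ hAQ UR VR σR SR hUR
    hVR hSR hAR
end

section
/- Let Σ_c be a 3×3 real symmetric positive definite matrix. Among all 3×3 real symmetric positive definite matrices W with Tr(W) = 3, the quantity Tr(W Σ_c W) is uniquely minimized at W_c = 3·Σ_c⁻¹ / Tr(Σ_c⁻¹), with minimal value 9 / Tr(Σ_c⁻¹). -/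
/-!
Write `W = W_c + D` with `Tr D = 0`. Since `W_c Σ_c` and `Σ_c W_c` are scalar multiples of the
identity, the cross terms of `Tr((W_c + D) Σ_c (W_c + D))` are multiples of `Tr D` and vanish,
leaving `9 / Tr(Σ_c⁻¹) + Tr(D Σ_c D)`; the last term is positive for a symmetric `D ≠ 0`.
-/

open Matrix
open scoped ComplexOrder

namespace Matrix

variable {n : Type*} [Fintype n]

theorem PosDef.trace_conjTranspose_mul_mul_same_pos {𝕜 : Type*} [RCLike 𝕜] {S D : Matrix n n 𝕜}
    (hS : S.PosDef) (hD : D ≠ 0) : 0 < (Dᴴ * S * D).trace := by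
  have hpsd := hS.posSemidef.conjTranspose_mul_mul_same D
  refine hpsd.trace_nonneg.lt_of_ne' fun h => hD ?_
  have hzero : Dᴴ * S * D = 0 := hpsd.trace_eq_zero_iff.mp h
  refine ext_iff_mulVec.mpr fun x => ?_
  by_contra hx
  have hpos := hS.dotProduct_mulVec_pos (x := D *ᵥ x) (by simpa using hx)
  rw [star_mulVec, ← dotProduct_mulVec, mulVec_mulVec, mulVec_mulVec, hzero, zero_mulVec,
    dotProduct_zero] at hpos
  exact hpos.false

variable {R : Type*} [CommRing R] [DecidableEq n] {S : Matrix n n R}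

theorem trace_smul_inv_mul_mul_smul_inv (hS : IsUnit S.det) (a : R) :
    (a • S⁻¹ * S * (a • S⁻¹)).trace = a ^ 2 * S⁻¹.trace := by
  rw [smul_mul, nonsing_inv_mul S hS, smul_mul, one_mul, smul_smul, trace_smul, smul_eq_mul, sq]

theorem trace_add_mul_mul_add_of_smul_inv (hS : IsUnit S.det) (a : R) {D : Matrix n n R}
    (hD : D.trace = 0) :
    ((a • S⁻¹ + D) * S * (a • S⁻¹ + D)).trace =
      (a • S⁻¹ * S * (a • S⁻¹)).trace + (D * S * D).trace := by
  have hleft : (a • S⁻¹ * S * D).trace = 0 := by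
    rw [smul_mul, nonsing_inv_mul S hS, smul_mul, one_mul, trace_smul, hD, smul_zero]
  have hright : (D * S * (a • S⁻¹)).trace = 0 := by
    rw [Matrix.mul_smul, mul_assoc, mul_nonsing_inv S hS, mul_one, trace_smul, hD, smul_zero]
  simp only [add_mul, mul_add, trace_add, hleft, hright]
  ring

end Matrix

/-- Among all `3×3` real symmetric positive definite matrices `W` with `Tr W = 3`,
`Tr(W Σ_c W)` is uniquely minimized at `W_c = 3 Σ_c⁻¹ / Tr(Σ_c⁻¹)`, with minimal value
`9 / Tr(Σ_c⁻¹)`. -/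
theorem stmt6 (Sc : Matrix (Fin 3) (Fin 3) ℝ) (hSc : Sc.PosDef) :
    let Wc : Matrix (Fin 3) (Fin 3) ℝ := (3 / (Sc⁻¹).trace) • Sc⁻¹
    Wc.PosDef ∧ Wc.trace = 3 ∧
      (Wc * Sc * Wc).trace = 9 / (Sc⁻¹).trace ∧
      ∀ W : Matrix (Fin 3) (Fin 3) ℝ, W.PosDef → W.trace = 3 → W ≠ Wc →
        9 / (Sc⁻¹).trace < (W * Sc * W).trace := by
  intro Wc
  have hdet : IsUnit Sc.det := (isUnit_iff_isUnit_det Sc).mp hSc.isUnit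
  have ht : 0 < (Sc⁻¹).trace := hSc.inv.trace_pos
  have hWc : Wc.PosDef := hSc.inv.smul (div_pos three_pos ht)
  have hWc_trace : Wc.trace = 3 := by
    rw [trace_smul, smul_eq_mul, div_mul_cancel₀ _ ht.ne']
  have hWc_value : (Wc * Sc * Wc).trace = 9 / (Sc⁻¹).trace := by
    rw [trace_smul_inv_mul_mul_smul_inv hdet]
    field_simp
    norm_num
  refine ⟨hWc, hWc_trace, hWc_value, fun W hW hW_trace hne => ?_⟩
  set D := W - Wc
  have hD_trace : D.trace = 0 := by rw [trace_sub, hW_trace, hWc_trace, sub_self]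
  have hD_herm : D.IsHermitian := hW.isHermitian.sub hWc.isHermitian
  calc 9 / (Sc⁻¹).trace < (Wc * Sc * Wc).trace + (Dᴴ * Sc * D).trace := by
        rw [hWc_value]
        exact lt_add_of_pos_right _
          (hSc.trace_conjTranspose_mul_mul_same_pos (sub_ne_zero.mpr hne))
    _ = (W * Sc * W).trace := by
        rw [hD_herm.eq, ← trace_add_mul_mul_add_of_smul_inv hdet _ hD_trace, add_sub_cancel]
end
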